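/- arXiv:1009.1270 — 4 statements merged into one kernel-verified Lean document; each statement's English description precedes it below -/
import Mathlib

section
/- On CP2 # 2 CP2-bar, every real cohomology class Ω with Ω^2 > 0, c_1·Ω > 0, and (c_1·Ω)^2 < 8 Ω^2 is a Kähler class (i.e., evaluates positively on each of the three exceptional (-1)-curve classes E_1, E_2, L - E_1 - E_2). -/
/-- On ℂP₂ # 2 ℂP₂-bar, identify H²(M;ℝ) with ℝ³ via the basis L,E₁,E₂, with
intersection form diag(1,-1,-1) and c₁ = (3,-1,-1).  Every class Ω = (x,y,z) with
Ω² > 0, c₁·Ω > 0 and (c₁·Ω)² < 8 Ω² is a Kähler class, i.e. it pairs positively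
with the exceptional classes E₁, E₂ and L-E₁-E₂. -/
theorem kahler_cone_criterion (x y z : ℝ)
    (h1 : 0 < x ^ 2 - y ^ 2 - z ^ 2)
    (h2 : 0 < 3 * x + y + z)
    (h3 : (3 * x + y + z) ^ 2 < 8 * (x ^ 2 - y ^ 2 - z ^ 2)) :
    0 < -y ∧ 0 < -z ∧ 0 < x + y + z := by
  have hyz : 0 < y * z := by nlinarith [sq_nonneg (x + 3*y + 3*z)]
  have hy : y < 0 := by
    by_contra hy
    push_neg at hy
    have hz : 0 < z := by
      by_contra hz
      push_neg at hz
      nlinarith [mul_nonpos_of_nonneg_of_nonpos hy hz]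
    nlinarith [sq_nonneg (y - z), mul_pos h2 (show (0:ℝ) < y + z by linarith)]
  have hz : z < 0 := by nlinarith
  refine ⟨by linarith, by linarith, ?_⟩
  by_contra h
  push_neg at h
  nlinarith [sq_nonneg (y - z),
    mul_nonneg (by linarith : (0:ℝ) ≤ -(x + y + z)) (by linarith : (0:ℝ) ≤ -(x + 5*y + 5*z))]
end

section
/- For all real β, γ > 0, the polynomial expression 1 + 12γ + 24γ^2 + 8γ^3 - 4γ^4 + 16γ^5 + 48γ^6 + 48β^6(1+γ)^6 + 16β^5(1 + 31γ + 93γ^2 + 129γ^3 + 108γ^4 + 60γ^5 + 18γ^6) + 4β(3 + 41γ + 116γ^2 + 162γ^3 + 168γ^4 + 124γ^5 + 72γ^6) + 8β^2(3 + 58γ + 162γ^2 + 219γ^3 + 236γ^4 + 186γ^5 + 90γ^6) + 8β^3(1 + 81γ + 219γ^2 + 271γ^3 + 294γ^4 + 258γ^5 + 120γ^6) + 4β^4(-1 + 168γ + 472γ^2 + 588γ^3 + 561γ^4 + 432γ^5 + 180γ^6) is strictly positive. -/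
/-- The denominator minus four times the numerator of the Futaki term 𝓑 on
ℂP₂ # 2 ℂP₂-bar is strictly positive for all β, γ > 0. -/
theorem denominator_minus_four_numerator_pos (β γ : ℝ) (hβ : 0 < β) (hγ : 0 < γ) :
    0 < 1 + 12*γ + 24*γ^2 + 8*γ^3 - 4*γ^4 + 16*γ^5 + 48*γ^6 +
      48*β^6*(1+γ)^6 +
      16*β^5*(1 + 31*γ + 93*γ^2 + 129*γ^3 + 108*γ^4 + 60*γ^5 + 18*γ^6) +
      4*β*(3 + 41*γ + 116*γ^2 + 162*γ^3 + 168*γ^4 + 124*γ^5 + 72*γ^6) +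
      8*β^2*(3 + 58*γ + 162*γ^2 + 219*γ^3 + 236*γ^4 + 186*γ^5 + 90*γ^6) +
      8*β^3*(1 + 81*γ + 219*γ^2 + 271*γ^3 + 294*γ^4 + 258*γ^5 + 120*γ^6) +
      4*β^4*(-1 + 168*γ + 472*γ^2 + 588*γ^3 + 561*γ^4 + 432*γ^5 + 180*γ^6) := by
  have key : 1 + 12*γ + 24*γ^2 + 8*γ^3 - 4*γ^4 + 16*γ^5 + 48*γ^6 +
      48*β^6*(1+γ)^6 +
      16*β^5*(1 + 31*γ + 93*γ^2 + 129*γ^3 + 108*γ^4 + 60*γ^5 + 18*γ^6) +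
      4*β*(3 + 41*γ + 116*γ^2 + 162*γ^3 + 168*γ^4 + 124*γ^5 + 72*γ^6) +
      8*β^2*(3 + 58*γ + 162*γ^2 + 219*γ^3 + 236*γ^4 + 186*γ^5 + 90*γ^6) +
      8*β^3*(1 + 81*γ + 219*γ^2 + 271*γ^3 + 294*γ^4 + 258*γ^5 + 120*γ^6) +
      4*β^4*(-1 + 168*γ + 472*γ^2 + 588*γ^3 + 561*γ^4 + 432*γ^5 + 180*γ^6)
      = γ^2*((2*γ^2-1)^2+3) + β^2*((2*β^2-1)^2+3) +
        (1 + 12*γ + 20*γ^2 + 8*γ^3 + 16*γ^5 + 44*γ^6 + 12*β + 164*β*γ + 464*β*γ^2 + 648*β*γ^3 + 672*β*γ^4 + 496*β*γ^5 + 288*β*γ^6 + 20*β^2 + 464*β^2*γ + 1296*β^2*γ^2 + 1752*β^2*γ^3 + 1888*β^2*γ^4 + 1488*β^2*γ^5 + 720*β^2*γ^6 + 8*β^3 + 648*β^3*γ + 1752*β^3*γ^2 + 2168*β^3*γ^3 + 2352*β^3*γ^4 + 2064*β^3*γ^5 + 960*β^3*γ^6 + 672*β^4*γ + 1888*β^4*γ^2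 + 2352*β^4*γ^3 + 2244*β^4*γ^4 + 1728*β^4*γ^5 + 720*β^4*γ^6 + 16*β^5 + 496*β^5*γ + 1488*β^5*γ^2 + 2064*β^5*γ^3 + 1728*β^5*γ^4 + 960*β^5*γ^5 + 288*β^5*γ^6 + 44*β^6 + 288*β^6*γ + 720*β^6*γ^2 + 960*β^6*γ^3 + 720*β^6*γ^4 + 288*β^6*γ^5 + 48*β^6*γ^6) := by ring
  rw [key]
  positivity
end

section
/- For all real β, γ > 0, the Futaki term B(β,γ) given explicitly as the quotient [8(γ^2(1+4γ+6γ^2+4γ^3) + βγ(-1+3γ+18γ^2+26γ^3+16γ^4) + 2β^5(2+8γ+21γ^2+33γ^3+27γ^4+9γ^5) + β^2(1+3γ+27γ^2+79γ^3+89γ^4+42γ^5) + β^4(6+26γ+89γ^2+168γ^3+150γ^4+54γ^5) + β^3(4+18γ+79γ^2+173γ^3+168γ^4+66γ^5))] / [48β^6(1+γ)^6 + 48β^5(1+γ)^3(3+12γ+14γ^2+6γ^3) + (1+2γ)^2(1+8γ+20γ^2+24γ^3+12γ^4) + 4β^4(1+γ)^2(47+282γ+573γ^2+504γ^3+180γ^4)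 + 4β(3+33γ+140γ^2+306γ^3+376γ^4+252γ^5+72γ^6) + 8β^2(7+70γ+270γ^2+535γ^3+592γ^4+354γ^5+90γ^6) + 8β^3(17+153γ+535γ^2+963γ^3+966γ^4+522γ^5+120γ^6)] satisfies 0 ≤ B(β,γ) < 1/4. -/
/-- Numerator of the Futaki term 𝓑 on ℂP₂ # 2 ℂP₂-bar (Kähler class (β,γ,1)). -/
noncomputable def futakiNum2 (β γ : ℝ) : ℝ :=
  8 * (γ^2*(1 + 4*γ + 6*γ^2 + 4*γ^3) +
    β*γ*(-1 + 3*γ + 18*γ^2 + 26*γ^3 + 16*γ^4) +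
    2*β^5*(2 + 8*γ + 21*γ^2 + 33*γ^3 + 27*γ^4 + 9*γ^5) +
    β^2*(1 + 3*γ + 27*γ^2 + 79*γ^3 + 89*γ^4 + 42*γ^5) +
    β^4*(6 + 26*γ + 89*γ^2 + 168*γ^3 + 150*γ^4 + 54*γ^5) +
    β^3*(4 + 18*γ + 79*γ^2 + 173*γ^3 + 168*γ^4 + 66*γ^5))

/-- Denominator of the Futaki term 𝓑 on ℂP₂ # 2 ℂP₂-bar. -/
noncomputable def futakiDen2 (β γ : ℝ) : ℝ :=
  48*β^6*(1+γ)^6 +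
  48*β^5*(1+γ)^3*(3 + 12*γ + 14*γ^2 + 6*γ^3) +
  (1+2*γ)^2*(1 + 8*γ + 20*γ^2 + 24*γ^3 + 12*γ^4) +
  4*β^4*(1+γ)^2*(47 + 282*γ + 573*γ^2 + 504*γ^3 + 180*γ^4) +
  4*β*(3 + 33*γ + 140*γ^2 + 306*γ^3 + 376*γ^4 + 252*γ^5 + 72*γ^6) +
  8*β^2*(7 + 70*γ + 270*γ^2 + 535*γ^3 + 592*γ^4 + 354*γ^5 + 90*γ^6) +
  8*β^3*(17 + 153*γ + 535*γ^2 + 963*γ^3 + 966*γ^4 + 522*γ^5 + 120*γ^6)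

/-- On ℂP₂ # 2 ℂP₂-bar the Futaki term 𝓑(β,γ) = futakiNum2/futakiDen2 satisfies
0 ≤ 𝓑 < 1/4 for all β, γ > 0. -/
theorem futaki_term_lt_quarter_two_points (β γ : ℝ) (hβ : 0 < β) (hγ : 0 < γ) :
    0 ≤ futakiNum2 β γ / futakiDen2 β γ ∧
    futakiNum2 β γ / futakiDen2 β γ < 1 / 4 := by
  have hb := hβ.le
  have hg := hγ.le
  have hN : 0 ≤ futakiNum2 β γ := by
    unfold futakiNum2
    linarith [sq_nonneg (β - γ), mul_nonneg (pow_nonneg hb 0) (pow_nonneg hg 1),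
    mul_nonneg (pow_nonneg hb 0) (pow_nonneg hg 2),
    mul_nonneg (pow_nonneg hb 0) (pow_nonneg hg 3),
    mul_nonneg (pow_nonneg hb 0) (pow_nonneg hg 4),
    mul_nonneg (pow_nonneg hb 0) (pow_nonneg hg 5),
    mul_nonneg (pow_nonneg hb 0) (pow_nonneg hg 6),
    mul_nonneg (pow_nonneg hb 1) (pow_nonneg hg 0),
    mul_nonneg (pow_nonneg hb 1) (pow_nonneg hg 1),
    mul_nonneg (pow_nonneg hb 1) (pow_nonneg hg 2),
    mul_nonneg (pow_nonneg hb 1) (pow_nonneg hg 3),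
    mul_nonneg (pow_nonneg hb 1) (pow_nonneg hg 4),
    mul_nonneg (pow_nonneg hb 1) (pow_nonneg hg 5),
    mul_nonneg (pow_nonneg hb 1) (pow_nonneg hg 6),
    mul_nonneg (pow_nonneg hb 2) (pow_nonneg hg 0),
    mul_nonneg (pow_nonneg hb 2) (pow_nonneg hg 1),
    mul_nonneg (pow_nonneg hb 2) (pow_nonneg hg 2),
    mul_nonneg (pow_nonneg hb 2) (pow_nonneg hg 3),
    mul_nonneg (pow_nonneg hb 2) (pow_nonneg hg 4),
    mul_nonneg (pow_nonneg hb 2) (pow_nonneg hg 5),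
    mul_nonneg (pow_nonneg hb 2) (pow_nonneg hg 6),
    mul_nonneg (pow_nonneg hb 3) (pow_nonneg hg 0),
    mul_nonneg (pow_nonneg hb 3) (pow_nonneg hg 1),
    mul_nonneg (pow_nonneg hb 3) (pow_nonneg hg 2),
    mul_nonneg (pow_nonneg hb 3) (pow_nonneg hg 3),
    mul_nonneg (pow_nonneg hb 3) (pow_nonneg hg 4),
    mul_nonneg (pow_nonneg hb 3) (pow_nonneg hg 5),
    mul_nonneg (pow_nonneg hb 3) (pow_nonneg hg 6),
    mul_nonneg (pow_nonneg hb 4) (pow_nonneg hg 0),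
    mul_nonneg (pow_nonneg hb 4) (pow_nonneg hg 1),
    mul_nonneg (pow_nonneg hb 4) (pow_nonneg hg 2),
    mul_nonneg (pow_nonneg hb 4) (pow_nonneg hg 3),
    mul_nonneg (pow_nonneg hb 4) (pow_nonneg hg 4),
    mul_nonneg (pow_nonneg hb 4) (pow_nonneg hg 5),
    mul_nonneg (pow_nonneg hb 4) (pow_nonneg hg 6),
    mul_nonneg (pow_nonneg hb 5) (pow_nonneg hg 0),
    mul_nonneg (pow_nonneg hb 5) (pow_nonneg hg 1),
    mul_nonneg (pow_nonneg hb 5) (pow_nonneg hg 2),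
    mul_nonneg (pow_nonneg hb 5) (pow_nonneg hg 3),
    mul_nonneg (pow_nonneg hb 5) (pow_nonneg hg 4),
    mul_nonneg (pow_nonneg hb 5) (pow_nonneg hg 5),
    mul_nonneg (pow_nonneg hb 5) (pow_nonneg hg 6),
    mul_nonneg (pow_nonneg hb 6) (pow_nonneg hg 0),
    mul_nonneg (pow_nonneg hb 6) (pow_nonneg hg 1),
    mul_nonneg (pow_nonneg hb 6) (pow_nonneg hg 2),
    mul_nonneg (pow_nonneg hb 6) (pow_nonneg hg 3),
    mul_nonneg (pow_nonneg hb 6) (pow_nonneg hg 4),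
    mul_nonneg (pow_nonneg hb 6) (pow_nonneg hg 5),
    mul_nonneg (pow_nonneg hb 6) (pow_nonneg hg 6)]
  have hD : 0 < futakiDen2 β γ := by
    unfold futakiDen2
    linarith [mul_nonneg (pow_nonneg hb 0) (pow_nonneg hg 1),
    mul_nonneg (pow_nonneg hb 0) (pow_nonneg hg 2),
    mul_nonneg (pow_nonneg hb 0) (pow_nonneg hg 3),
    mul_nonneg (pow_nonneg hb 0) (pow_nonneg hg 4),
    mul_nonneg (pow_nonneg hb 0) (pow_nonneg hg 5),
    mul_nonneg (pow_nonneg hb 0) (pow_nonneg hg 6),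
    mul_nonneg (pow_nonneg hb 1) (pow_nonneg hg 0),
    mul_nonneg (pow_nonneg hb 1) (pow_nonneg hg 1),
    mul_nonneg (pow_nonneg hb 1) (pow_nonneg hg 2),
    mul_nonneg (pow_nonneg hb 1) (pow_nonneg hg 3),
    mul_nonneg (pow_nonneg hb 1) (pow_nonneg hg 4),
    mul_nonneg (pow_nonneg hb 1) (pow_nonneg hg 5),
    mul_nonneg (pow_nonneg hb 1) (pow_nonneg hg 6),
    mul_nonneg (pow_nonneg hb 2) (pow_nonneg hg 0),
    mul_nonneg (pow_nonneg hb 2) (pow_nonneg hg 1),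
    mul_nonneg (pow_nonneg hb 2) (pow_nonneg hg 2),
    mul_nonneg (pow_nonneg hb 2) (pow_nonneg hg 3),
    mul_nonneg (pow_nonneg hb 2) (pow_nonneg hg 4),
    mul_nonneg (pow_nonneg hb 2) (pow_nonneg hg 5),
    mul_nonneg (pow_nonneg hb 2) (pow_nonneg hg 6),
    mul_nonneg (pow_nonneg hb 3) (pow_nonneg hg 0),
    mul_nonneg (pow_nonneg hb 3) (pow_nonneg hg 1),
    mul_nonneg (pow_nonneg hb 3) (pow_nonneg hg 2),
    mul_nonneg (pow_nonneg hb 3) (pow_nonneg hg 3),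
    mul_nonneg (pow_nonneg hb 3) (pow_nonneg hg 4),
    mul_nonneg (pow_nonneg hb 3) (pow_nonneg hg 5),
    mul_nonneg (pow_nonneg hb 3) (pow_nonneg hg 6),
    mul_nonneg (pow_nonneg hb 4) (pow_nonneg hg 0),
    mul_nonneg (pow_nonneg hb 4) (pow_nonneg hg 1),
    mul_nonneg (pow_nonneg hb 4) (pow_nonneg hg 2),
    mul_nonneg (pow_nonneg hb 4) (pow_nonneg hg 3),
    mul_nonneg (pow_nonneg hb 4) (pow_nonneg hg 4),
    mul_nonneg (pow_nonneg hb 4) (pow_nonneg hg 5),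
    mul_nonneg (pow_nonneg hb 4) (pow_nonneg hg 6),
    mul_nonneg (pow_nonneg hb 5) (pow_nonneg hg 0),
    mul_nonneg (pow_nonneg hb 5) (pow_nonneg hg 1),
    mul_nonneg (pow_nonneg hb 5) (pow_nonneg hg 2),
    mul_nonneg (pow_nonneg hb 5) (pow_nonneg hg 3),
    mul_nonneg (pow_nonneg hb 5) (pow_nonneg hg 4),
    mul_nonneg (pow_nonneg hb 5) (pow_nonneg hg 5),
    mul_nonneg (pow_nonneg hb 5) (pow_nonneg hg 6),
    mul_nonneg (pow_nonneg hb 6) (pow_nonneg hg 0),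
    mul_nonneg (pow_nonneg hb 6) (pow_nonneg hg 1),
    mul_nonneg (pow_nonneg hb 6) (pow_nonneg hg 2),
    mul_nonneg (pow_nonneg hb 6) (pow_nonneg hg 3),
    mul_nonneg (pow_nonneg hb 6) (pow_nonneg hg 4),
    mul_nonneg (pow_nonneg hb 6) (pow_nonneg hg 5),
    mul_nonneg (pow_nonneg hb 6) (pow_nonneg hg 6)]
  have hQ : 4 * futakiNum2 β γ < futakiDen2 β γ := by
    unfold futakiNum2 futakiDen2
    linarith [mul_nonneg (pow_nonneg hb 3) (sq_nonneg (4*β - 1)),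
      mul_nonneg (pow_nonneg hg 3) (sq_nonneg (4*γ - 1)), mul_nonneg (pow_nonneg hb 0) (pow_nonneg hg 1),
    mul_nonneg (pow_nonneg hb 0) (pow_nonneg hg 2),
    mul_nonneg (pow_nonneg hb 0) (pow_nonneg hg 3),
    mul_nonneg (pow_nonneg hb 0) (pow_nonneg hg 4),
    mul_nonneg (pow_nonneg hb 0) (pow_nonneg hg 5),
    mul_nonneg (pow_nonneg hb 0) (pow_nonneg hg 6),
    mul_nonneg (pow_nonneg hb 1) (pow_nonneg hg 0),
    mul_nonneg (pow_nonneg hb 1) (pow_nonneg hg 1),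
    mul_nonneg (pow_nonneg hb 1) (pow_nonneg hg 2),
    mul_nonneg (pow_nonneg hb 1) (pow_nonneg hg 3),
    mul_nonneg (pow_nonneg hb 1) (pow_nonneg hg 4),
    mul_nonneg (pow_nonneg hb 1) (pow_nonneg hg 5),
    mul_nonneg (pow_nonneg hb 1) (pow_nonneg hg 6),
    mul_nonneg (pow_nonneg hb 2) (pow_nonneg hg 0),
    mul_nonneg (pow_nonneg hb 2) (pow_nonneg hg 1),
    mul_nonneg (pow_nonneg hb 2) (pow_nonneg hg 2),
    mul_nonneg (pow_nonneg hb 2) (pow_nonneg hg 3),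
    mul_nonneg (pow_nonneg hb 2) (pow_nonneg hg 4),
    mul_nonneg (pow_nonneg hb 2) (pow_nonneg hg 5),
    mul_nonneg (pow_nonneg hb 2) (pow_nonneg hg 6),
    mul_nonneg (pow_nonneg hb 3) (pow_nonneg hg 0),
    mul_nonneg (pow_nonneg hb 3) (pow_nonneg hg 1),
    mul_nonneg (pow_nonneg hb 3) (pow_nonneg hg 2),
    mul_nonneg (pow_nonneg hb 3) (pow_nonneg hg 3),
    mul_nonneg (pow_nonneg hb 3) (pow_nonneg hg 4),
    mul_nonneg (pow_nonneg hb 3) (pow_nonneg hg 5),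
    mul_nonneg (pow_nonneg hb 3) (pow_nonneg hg 6),
    mul_nonneg (pow_nonneg hb 4) (pow_nonneg hg 0),
    mul_nonneg (pow_nonneg hb 4) (pow_nonneg hg 1),
    mul_nonneg (pow_nonneg hb 4) (pow_nonneg hg 2),
    mul_nonneg (pow_nonneg hb 4) (pow_nonneg hg 3),
    mul_nonneg (pow_nonneg hb 4) (pow_nonneg hg 4),
    mul_nonneg (pow_nonneg hb 4) (pow_nonneg hg 5),
    mul_nonneg (pow_nonneg hb 4) (pow_nonneg hg 6),
    mul_nonneg (pow_nonneg hb 5) (pow_nonneg hg 0),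
    mul_nonneg (pow_nonneg hb 5) (pow_nonneg hg 1),
    mul_nonneg (pow_nonneg hb 5) (pow_nonneg hg 2),
    mul_nonneg (pow_nonneg hb 5) (pow_nonneg hg 3),
    mul_nonneg (pow_nonneg hb 5) (pow_nonneg hg 4),
    mul_nonneg (pow_nonneg hb 5) (pow_nonneg hg 5),
    mul_nonneg (pow_nonneg hb 5) (pow_nonneg hg 6),
    mul_nonneg (pow_nonneg hb 6) (pow_nonneg hg 0),
    mul_nonneg (pow_nonneg hb 6) (pow_nonneg hg 1),
    mul_nonneg (pow_nonneg hb 6) (pow_nonneg hg 2),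
    mul_nonneg (pow_nonneg hb 6) (pow_nonneg hg 3),
    mul_nonneg (pow_nonneg hb 6) (pow_nonneg hg 4),
    mul_nonneg (pow_nonneg hb 6) (pow_nonneg hg 5),
    mul_nonneg (pow_nonneg hb 6) (pow_nonneg hg 6)]
  refine ⟨div_nonneg hN hD.le, ?_⟩
  rw [div_lt_iff₀ hD]
  linarith
end

section
/- For β, γ > 0, let A = [1 + 6(1+β)(β + β^2 + β^3 + γ(1 + 4β + 4β^2 + 2β^3) + γ^2(1+β)^3)]/(288π^2 V), B the same with β, γ swapped, and C = -[1 + 6(1+β)(1+γ)(β + γ + 3βγ)]/(576π^2 V), where V = βγ + β + γ + 1/2. Then AB - C^2 > 0. -/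
open Real in
/-- For the second moments A = ∫(x-x₀)², B = ∫(y-y₀)², C = ∫(x-x₀)(y-y₀) over
the moment pentagon of ℂP₂ # 2 ℂP₂-bar (Kähler class (β,γ,1)), one has
AB - C² > 0. -/
theorem second_moments_nondegenerate (β γ : ℝ) (hβ : 0 < β) (hγ : 0 < γ) :
    let V : ℝ := β * γ + β + γ + 1 / 2
    let A : ℝ := (1 + 6 * (1 + β) * (β + β^2 + β^3 +
      γ * (1 + 4*β + 4*β^2 + 2*β^3) + γ^2 * (1 + β)^3)) / (288 * π^2 * V)
    let B : ℝ := (1 + 6 * (1 + γ) * (γ + γ^2 + γ^3 +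
      β * (1 + 4*γ + 4*γ^2 + 2*γ^3) + β^2 * (1 + γ)^3)) / (288 * π^2 * V)
    let C : ℝ := -(1 + 6 * (1 + β) * (1 + γ) * (β + γ + 3*β*γ)) / (576 * π^2 * V)
    0 < A * B - C ^ 2 := by
  intro V A B C
  have hV : 0 < V := by simp only [V]; linarith [mul_pos hβ hγ]
  have hπ : 0 < π := pi_pos
  have hden : 0 < 576 ^ 2 * π ^ 4 * V ^ 2 := by positivity
  have key : A * B - C ^ 2 =
      (3 + 36*γ + 168*γ^2 + 408*γ^3 + 564*γ^4 + 432*γ^5 + 144*γ^6 + 36*β + 396*β*γ + 1680*β*γ^2 + 3672*β*γ^3 + 4512*β*γ^4 + 3024*β*γ^5 + 864*β*γ^6 + 168*β^2 + 1680*β^2*γ + 6480*β^2*γ^2 + 12840*β^2*γ^3 + 14208*β^2*γ^4 + 8496*β^2*γ^5 + 2160*β^2*γ^6 + 408*β^3 + 3672*β^3*γ + 12840*β^3*γ^2 + 23112*β^3*γ^3 + 23184*β^3*γ^4 + 12528*β^3*γ^5 + 2880*β^3*γ^6 + 564*β^4 + 4512*β^4*γ + 14208*β^4*γ^2 + 23184*β^4*γ^3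 + 21132*β^4*γ^4 + 10368*β^4*γ^5 + 2160*β^4*γ^6 + 432*β^5 + 3024*β^5*γ + 8496*β^5*γ^2 + 12528*β^5*γ^3 + 10368*β^5*γ^4 + 4608*β^5*γ^5 + 864*β^5*γ^6 + 144*β^6 + 864*β^6*γ + 2160*β^6*γ^2 + 2880*β^6*γ^3 + 2160*β^6*γ^4 + 864*β^6*γ^5 + 144*β^6*γ^6) / (576 ^ 2 * π ^ 4 * V ^ 2) := by
    simp only [A, B, C]
    field_simp
    ring
  rw [key]
  positivity
end
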